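/- For a, b ∈ ℝ with a < b, real t > 0, and real x: (1/√(πt)) ∫_a^b exp(−(x−y)²/t) · e^{−y²} dy = (1/(2√(1+t))) · exp(−x²/(1+t)) · (erfc(F(t,x,a)) − erfc(F(t,x,b))), where F(t,x,y) = √((1+t)/t)·(y − x/(1+t)). -/
import Mathlib


open MeasureTheory

noncomputable def erfc (z : ℝ) : ℝ :=
  (2 / Real.sqrt Real.pi) * ∫ s in Set.Ioi z, Real.exp (-s ^ 2)

noncomputable def Ffun (t x y : ℝ) : ℝ :=
  Real.sqrt ((1 + t) / t) * (y - x / (1 + t))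

lemma integrable_exp_neg_sq : Integrable (fun s : ℝ => Real.exp (-s ^ 2)) := by
  have := integrable_exp_neg_mul_sq (b := 1) one_pos
  simpa using this

lemma erfc_sub (z₁ z₂ : ℝ) :
    erfc z₁ - erfc z₂ = (2 / Real.sqrt Real.pi) * ∫ s in z₁..z₂, Real.exp (-s ^ 2) := by
  unfold erfc
  rw [← mul_sub]
  congr 1
  have h1 := intervalIntegral.integral_Iic_add_Ioi (b := z₁)
    (integrable_exp_neg_sq.integrableOn) (integrable_exp_neg_sq.integrableOn)
  have h2 := intervalIntegral.integral_Iic_add_Ioi (b := z₂)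
    (integrable_exp_neg_sq.integrableOn) (integrable_exp_neg_sq.integrableOn)
  have h3 := intervalIntegral.integral_Iic_sub_Iic (a := z₁) (b := z₂)
    (f := fun s : ℝ => Real.exp (-s ^ 2))
    (integrable_exp_neg_sq.integrableOn) (integrable_exp_neg_sq.integrableOn)
  linarith

theorem stmt17 (a b t x : ℝ) (hab : a < b) (ht : 0 < t) :
    (1 / Real.sqrt (Real.pi * t)) * ∫ y in a..b, Real.exp (-(x - y) ^ 2 / t) * Real.exp (-y ^ 2) =
      (1 / (2 * Real.sqrt (1 + t))) * Real.exp (-x ^ 2 / (1 + t)) *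
        (erfc (Ffun t x a) - erfc (Ffun t x b)) := by
  have ht1 : (0:ℝ) < 1 + t := by linarith
  set k := Real.sqrt ((1 + t) / t) with hk_def
  have hk : 0 < k := Real.sqrt_pos.mpr (by positivity)
  have hk2 : k ^ 2 = (1 + t) / t := Real.sq_sqrt (by positivity)
  set c : ℝ := -(k * (x / (1 + t))) with hc_def
  -- complete the square
  have hsq : ∀ y : ℝ, Real.exp (-(x - y) ^ 2 / t) * Real.exp (-y ^ 2)
      = Real.exp (-x ^ 2 / (1 + t)) * Real.exp (-(k * y + c) ^ 2) := by
    intro y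
    rw [← Real.exp_add, ← Real.exp_add]
    congr 1
    have : (k * y + c) ^ 2 = k ^ 2 * (y - x / (1 + t)) ^ 2 := by
      rw [hc_def]; ring
    rw [this, hk2]
    field_simp
    ring
  rw [intervalIntegral.integral_congr (g := fun y =>
      Real.exp (-x ^ 2 / (1 + t)) * Real.exp (-(k * y + c) ^ 2))
      (fun y _ => hsq y)]
  rw [intervalIntegral.integral_const_mul]
  have hsub := intervalIntegral.integral_comp_mul_add
    (f := fun s : ℝ => Real.exp (-s ^ 2)) (a := a) (b := b) (c := k) (ne_of_gt hk) c
  have hFa : Ffun t x a = k * a + c := by rw [Ffun, hc_def]; ring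
  have hFb : Ffun t x b = k * b + c := by rw [Ffun, hc_def]; ring
  rw [hsub, erfc_sub, hFa, hFb]
  rw [smul_eq_mul]
  have hpi : (0:ℝ) < Real.pi := Real.pi_pos
  have hkey : 1 / Real.sqrt (Real.pi * t) * k⁻¹ = 1 / (2 * Real.sqrt (1 + t)) * (2 / Real.sqrt Real.pi) := by
    rw [hk_def, Real.sqrt_div' _ (by positivity), Real.sqrt_mul (le_of_lt hpi)]
    have h1 : Real.sqrt Real.pi ≠ 0 := by positivity
    have h2 : Real.sqrt t ≠ 0 := by positivity
    have h3 : Real.sqrt (1 + t) ≠ 0 := by positivity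
    field_simp
  calc 1 / Real.sqrt (Real.pi * t) *
        (Real.exp (-x ^ 2 / (1 + t)) * (k⁻¹ * ∫ s in k * a + c..k * b + c, Real.exp (-s ^ 2)))
      = (1 / Real.sqrt (Real.pi * t) * k⁻¹) * Real.exp (-x ^ 2 / (1 + t)) *
        ∫ s in k * a + c..k * b + c, Real.exp (-s ^ 2) := by ring
    _ = _ := by rw [hkey]; ring
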